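/- Let n, m ≥ 1, a⁺, a⁻ : Fin n → Fin m → [0,1], and b : Fin n → (0,1]. The system of equations ⋁_{j} ((a⁺_{ij} · x_j) ⊔ (a⁻_{ij} · n_P(x_j))) = b_i for all i ∈ Fin n is solvable (i.e., there exists x : Fin m → [0,1] satisfying all n equations simultaneously) if and only if there exist disjoint subsets J⁺, J⁻ ⊆ Fin m such that for every i ∈ Fin n, either (1) there exists j ∈ J⁺ with a⁺_{ij} ≥ b_i and (b_i ←_P a⁺_{ij}) ≤ (b_h ←_P a⁺_{hj}) for all h ∈ Fin n, or (2) there exists j ∈ J⁻ with a⁻_{ij} = b_i and a⁻_{hj} ≤ b_h for all h ∈ Fin n. -/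

import Mathlib

open Set

noncomputable def nP (x : ℝ) : ℝ := if x = 0 then 1 else 0

noncomputable def resP (z a : ℝ) : ℝ := if a = 0 then 1 else min 1 (z / a)

noncomputable def bSup {m : ℕ} (hm : 1 ≤ m) (f : Fin m → ℝ) : ℝ :=
  Finset.univ.sup' ⟨⟨0, hm⟩, Finset.mem_univ _⟩ f

noncomputable def bInf {m : ℕ} (hm : 1 ≤ m) (f : Fin m → ℝ) : ℝ :=
  Finset.univ.inf' ⟨⟨0, hm⟩, Finset.mem_univ _⟩ f

/-!
If `x` solves the system, pick for each row `i` a column `j` attaining the supremum `b i`.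
If `x j = 0` the row reads `a⁻ i j = b i`, and column `j` keeps every row below its bound;
if `x j > 0` the negation vanishes, so `x j = b i / a⁺ i j` is forced, and the bounds
`a⁺ h j * x j ≤ b h` say, by adjointness, that this residuum is the least in column `j`.

Conversely, put `x j = 0` on the columns of `J⁻` whose negative coefficients stay below `b`,
and elsewhere the greatest admissible value `x j = min_h (b h ←_P a⁺ h j)`. This minimum is
positive, so the negation term vanishes there, and it equals `b i ←_P a⁺ i j` on a column
witnessing (1) for row `i`.
-/

open Finset in
lemma bSup_eq_iff {m : ℕ} (hm : 1 ≤ m) (f : Fin m → ℝ) (c : ℝ) :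
    bSup hm f = c ↔ (∀ j, f j ≤ c) ∧ ∃ j, f j = c := by
  constructor
  · rintro rfl
    obtain ⟨j, -, hj⟩ := exists_mem_eq_sup' ⟨⟨0, hm⟩, mem_univ _⟩ f
    exact ⟨fun k => le_sup' f (mem_univ k), j, hj.symm⟩
  · rintro ⟨hle, j, rfl⟩
    exact le_antisymm (sup'_le _ _ fun k _ => hle k) (le_sup' f (mem_univ j))

lemma bInf_le {n : ℕ} (hn : 1 ≤ n) (f : Fin n → ℝ) (i : Fin n) : bInf hn f ≤ f i :=
  Finset.inf'_le f (Finset.mem_univ i)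

lemma le_bInf_iff {n : ℕ} (hn : 1 ≤ n) (f : Fin n → ℝ) (c : ℝ) :
    c ≤ bInf hn f ↔ ∀ i, c ≤ f i :=
  (Finset.le_inf'_iff _ f).trans (by simp)

lemma lt_bInf_iff {n : ℕ} (hn : 1 ≤ n) (f : Fin n → ℝ) (c : ℝ) :
    c < bInf hn f ↔ ∀ i, c < f i :=
  (Finset.lt_inf'_iff _).trans (by simp)

lemma eq_of_sup_eq_of_lt {α : Type*} [LinearOrder α] {a b c : α} (h : a ⊔ b = c) (hc : b < c) :
    a = c := by
  subst h
  exact max_eq_left ((lt_max_iff.1 hc).resolve_right (lt_irrefl b)).le |>.symm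

lemma nP_zero : nP 0 = 1 := if_pos rfl

lemma nP_of_ne_zero {x : ℝ} (hx : x ≠ 0) : nP x = 0 := if_neg hx

section Residuum

variable {z a x : ℝ}

lemma resP_nonneg (hz : 0 ≤ z) (ha : 0 ≤ a) : 0 ≤ resP z a := by
  unfold resP
  split
  · exact zero_le_one
  · exact le_min zero_le_one (div_nonneg hz ha)

lemma resP_le_one (z a : ℝ) : resP z a ≤ 1 := by
  unfold resP
  split
  · exact le_rfl
  · exact min_le_left _ _

lemma resP_pos (hz : 0 < z) (ha : 0 ≤ a) : 0 < resP z a := by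
  unfold resP
  split_ifs with h0
  · exact one_pos
  · exact lt_min one_pos (div_pos hz (ha.lt_of_ne' h0))

lemma mul_le_iff_le_resP (ha : 0 ≤ a) (hx : x ≤ 1) (hz : 0 ≤ z) : a * x ≤ z ↔ x ≤ resP z a := by
  unfold resP
  split_ifs with h0
  · simp [h0, hx, hz]
  · rw [le_min_iff, le_div_iff₀ (ha.lt_of_ne' h0), mul_comm]
    exact (and_iff_right hx).symm

lemma resP_eq_of_mul_eq (hx : x ≤ 1) (h : a * x = z) (hz : 0 < z) : resP z a = x := by
  have ha : a ≠ 0 := by rintro rfl; simp [← h] at hz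
  rw [resP, if_neg ha, ← h, mul_div_cancel_left₀ x ha, min_eq_right hx]

lemma mul_resP_of_le (ha : 0 < a) (hza : z ≤ a) : a * resP z a = z := by
  rw [resP, if_neg ha.ne', min_eq_right ((div_le_one ha).2 hza), mul_div_cancel₀ z ha.ne']

end Residuum

noncomputable def eqTerm (p q x : ℝ) : ℝ := (p * x) ⊔ (q * nP x)

lemma eqTerm_zero (p q : ℝ) : eqTerm p q 0 = q ⊔ 0 := by
  rw [eqTerm, nP_zero, mul_zero, mul_one, sup_comm]

lemma eqTerm_of_ne_zero (p q : ℝ) {x : ℝ} (hx : x ≠ 0) : eqTerm p q x = (p * x) ⊔ 0 := by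
  rw [eqTerm, nP_of_ne_zero hx, mul_zero]

section System

variable {n m : ℕ} {ap am : Fin n → Fin m → ℝ} {b : Fin n → ℝ}

def IsSolution (hm : 1 ≤ m) (ap am : Fin n → Fin m → ℝ) (b : Fin n → ℝ) (x : Fin m → ℝ) : Prop :=
  ∀ i, bSup hm (fun j => eqTerm (ap i j) (am i j) (x j)) = b i

def PosWitness (ap : Fin n → Fin m → ℝ) (b : Fin n → ℝ) (i : Fin n) (j : Fin m) : Prop :=
  b i ≤ ap i j ∧ ∀ h, resP (b i) (ap i j) ≤ resP (b h) (ap h j)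

def NegWitness (am : Fin n → Fin m → ℝ) (b : Fin n → ℝ) (i : Fin n) (j : Fin m) : Prop :=
  am i j = b i ∧ ∀ h, am h j ≤ b h

lemma negWitness_of_eqTerm_zero {i : Fin n} {j : Fin m} (hb : 0 < b i)
    (hcol : ∀ h, eqTerm (ap h j) (am h j) 0 ≤ b h) (hi : eqTerm (ap i j) (am i j) 0 = b i) :
    NegWitness am b i j := by
  simp only [eqTerm_zero] at hcol hi
  exact ⟨eq_of_sup_eq_of_lt hi hb, fun h => le_sup_left.trans (hcol h)⟩

lemma posWitness_of_eqTerm {i : Fin n} {j : Fin m} {x : ℝ} (hap : ∀ h, 0 ≤ ap h j)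
    (hb : ∀ h, 0 < b h) (hx1 : x ≤ 1) (hx0 : x ≠ 0)
    (hcol : ∀ h, eqTerm (ap h j) (am h j) x ≤ b h) (hi : eqTerm (ap i j) (am i j) x = b i) :
    PosWitness ap b i j := by
  simp only [eqTerm_of_ne_zero _ _ hx0] at hcol hi
  have hprod : ap i j * x = b i := eq_of_sup_eq_of_lt hi (hb i)
  rw [PosWitness, resP_eq_of_mul_eq hx1 hprod (hb i)]
  refine ⟨hprod ▸ mul_le_of_le_one_right (hap i) hx1, fun h => ?_⟩
  exact (mul_le_iff_le_resP (hap h) hx1 (hb h).le).1 (le_sup_left.trans (hcol h))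

theorem exists_witnesses_of_isSolution (hm : 1 ≤ m) (hap : ∀ i j, 0 ≤ ap i j)
    (hb : ∀ i, 0 < b i) {x : Fin m → ℝ} (hx1 : ∀ j, x j ≤ 1) (hx : IsSolution hm ap am b x) :
    ∃ Jp Jm : Finset (Fin m), Disjoint Jp Jm ∧
      ∀ i, (∃ j ∈ Jp, PosWitness ap b i j) ∨ (∃ j ∈ Jm, NegWitness am b i j) := by
  classical
  refine ⟨Finset.univ.filter (fun j => ¬x j = 0), Finset.univ.filter (fun j => x j = 0),
    (Finset.disjoint_filter_filter_not _ _ (fun j => x j = 0)).symm, fun i => ?_⟩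
  obtain ⟨-, j, hj⟩ := (bSup_eq_iff hm _ _).1 (hx i)
  have hcol : ∀ h, eqTerm (ap h j) (am h j) (x j) ≤ b h :=
    fun h => ((bSup_eq_iff hm _ _).1 (hx h)).1 j
  by_cases hxj : x j = 0
  · rw [hxj] at hcol hj
    exact .inr ⟨j, by simpa using hxj, negWitness_of_eqTerm_zero (hb i) hcol hj⟩
  · exact .inl ⟨j, by simpa using hxj,
      posWitness_of_eqTerm (fun h => hap h j) hb (hx1 j) hxj hcol hj⟩

/-- The greatest `x j` with `ap h j * x j ≤ b h` for every row `h`. -/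
noncomputable def resBound (hn : 1 ≤ n) (ap : Fin n → Fin m → ℝ) (b : Fin n → ℝ) (j : Fin m) :
    ℝ :=
  bInf hn fun h => resP (b h) (ap h j)

lemma resBound_mem_Icc (hn : 1 ≤ n) (hap : ∀ i j, 0 ≤ ap i j) (hb : ∀ i, 0 < b i) (j : Fin m) :
    resBound hn ap b j ∈ Icc 0 1 :=
  ⟨(le_bInf_iff hn _ _).2 fun h => resP_nonneg (hb h).le (hap h j),
    (bInf_le hn _ ⟨0, hn⟩).trans (resP_le_one _ _)⟩

lemma resBound_pos (hn : 1 ≤ n) (hap : ∀ i j, 0 ≤ ap i j) (hb : ∀ i, 0 < b i) (j : Fin m) :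
    0 < resBound hn ap b j :=
  (lt_bInf_iff hn _ _).2 fun h => resP_pos (hb h) (hap h j)

lemma mul_resBound_le (hn : 1 ≤ n) (hap : ∀ i j, 0 ≤ ap i j) (hb : ∀ i, 0 < b i)
    (i : Fin n) (j : Fin m) : ap i j * resBound hn ap b j ≤ b i :=
  (mul_le_iff_le_resP (hap i j) (resBound_mem_Icc hn hap hb j).2 (hb i).le).2 (bInf_le hn _ i)

lemma PosWitness.resBound_eq (hn : 1 ≤ n) {i : Fin n} {j : Fin m} (hw : PosWitness ap b i j) :
    resBound hn ap b j = resP (b i) (ap i j) :=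
  le_antisymm (bInf_le hn _ i) ((le_bInf_iff hn _ _).2 hw.2)

noncomputable def witnessSolution (hn : 1 ≤ n) (ap am : Fin n → Fin m → ℝ) (b : Fin n → ℝ)
    (Jm : Finset (Fin m)) (j : Fin m) : ℝ :=
  open Classical in
  if j ∈ Jm ∧ ∀ h, am h j ≤ b h then 0 else resBound hn ap b j

lemma witnessSolution_mem_Icc (hn : 1 ≤ n) (hap : ∀ i j, 0 ≤ ap i j) (hb : ∀ i, 0 < b i)
    (Jm : Finset (Fin m)) (j : Fin m) :
    witnessSolution hn ap am b Jm j ∈ Icc 0 1 := by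
  unfold witnessSolution
  split
  · exact ⟨le_rfl, zero_le_one⟩
  · exact resBound_mem_Icc hn hap hb j

lemma eqTerm_witnessSolution_le (hn : 1 ≤ n) (hap : ∀ i j, 0 ≤ ap i j) (hb : ∀ i, 0 < b i)
    (Jm : Finset (Fin m)) (i : Fin n) (j : Fin m) :
    eqTerm (ap i j) (am i j) (witnessSolution hn ap am b Jm j) ≤ b i := by
  unfold witnessSolution
  split_ifs with hj
  · rw [eqTerm_zero]
    exact sup_le (hj.2 i) (hb i).le
  · rw [eqTerm_of_ne_zero _ _ (resBound_pos hn hap hb j).ne']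
    exact sup_le (mul_resBound_le hn hap hb i j) (hb i).le

lemma eqTerm_witnessSolution_of_posWitness (hn : 1 ≤ n) (hap : ∀ i j, 0 ≤ ap i j)
    (hb : ∀ i, 0 < b i) (Jm : Finset (Fin m)) {i : Fin n} {j : Fin m} (hj : j ∉ Jm)
    (hw : PosWitness ap b i j) :
    eqTerm (ap i j) (am i j) (witnessSolution hn ap am b Jm j) = b i := by
  have hapos : 0 < ap i j := (hb i).trans_le hw.1
  rw [witnessSolution, if_neg (fun h => hj h.1),
    eqTerm_of_ne_zero _ _ (resBound_pos hn hap hb j).ne', hw.resBound_eq hn,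
    mul_resP_of_le hapos hw.1, max_eq_left (hb i).le]

lemma eqTerm_witnessSolution_of_negWitness (hn : 1 ≤ n) (hb : ∀ i, 0 < b i)
    (Jm : Finset (Fin m)) {i : Fin n} {j : Fin m} (hj : j ∈ Jm) (hw : NegWitness am b i j) :
    eqTerm (ap i j) (am i j) (witnessSolution hn ap am b Jm j) = b i := by
  rw [witnessSolution, if_pos ⟨hj, hw.2⟩, eqTerm_zero, hw.1, max_eq_left (hb i).le]

theorem isSolution_witnessSolution (hn : 1 ≤ n) (hap : ∀ i j, 0 ≤ ap i j) (hb : ∀ i, 0 < b i)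
    (Jm : Finset (Fin m)) (hm : 1 ≤ m) {Jp : Finset (Fin m)} (hJ : Disjoint Jp Jm)
    (hw : ∀ i, (∃ j ∈ Jp, PosWitness ap b i j) ∨ (∃ j ∈ Jm, NegWitness am b i j)) :
    IsSolution hm ap am b (witnessSolution hn ap am b Jm) := by
  refine fun i => (bSup_eq_iff hm _ _).2 ⟨fun j => eqTerm_witnessSolution_le hn hap hb Jm i j, ?_⟩
  rcases hw i with ⟨j, hjp, hpos⟩ | ⟨j, hjm, hneg⟩
  · exact ⟨j, eqTerm_witnessSolution_of_posWitness hn hap hb Jm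
      (Finset.disjoint_left.1 hJ hjp) hpos⟩
  · exact ⟨j, eqTerm_witnessSolution_of_negWitness hn hb Jm hjm hneg⟩

end System

theorem stmt13_general (n m : ℕ) (hn : 1 ≤ n) (hm : 1 ≤ m)
    (ap am : Fin n → Fin m → ℝ) (b : Fin n → ℝ)
    (hap : ∀ i j, ap i j ∈ Icc (0:ℝ) 1)
    (hb : ∀ i, b i ∈ Ioc (0:ℝ) 1) :
    (∃ x : Fin m → ℝ, (∀ j, x j ∈ Icc (0:ℝ) 1) ∧
      ∀ i, bSup hm (fun j => (ap i j * x j) ⊔ (am i j * nP (x j))) = b i) ↔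
    (∃ Jp Jm : Finset (Fin m), Disjoint Jp Jm ∧
      ∀ i, (∃ j ∈ Jp, b i ≤ ap i j ∧
              ∀ h, resP (b i) (ap i j) ≤ resP (b h) (ap h j)) ∨
           (∃ j ∈ Jm, am i j = b i ∧ ∀ h, am h j ≤ b h)) := by
  have hap0 : ∀ i j, 0 ≤ ap i j := fun i j => (hap i j).1
  have hb0 : ∀ i, 0 < b i := fun i => (hb i).1
  constructor
  · rintro ⟨x, hx, hsol⟩
    exact exists_witnesses_of_isSolution hm hap0 hb0 (fun j => (hx j).2) hsol
  · rintro ⟨Jp, Jm, hJ, hw⟩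
    exact ⟨witnessSolution hn ap am b Jm, witnessSolution_mem_Icc hn hap0 hb0 Jm,
      isSolution_witnessSolution hn hap0 hb0 Jm hm hJ hw⟩

theorem stmt13 (n m : ℕ) (hn : 1 ≤ n) (hm : 1 ≤ m)
    (ap am : Fin n → Fin m → ℝ) (b : Fin n → ℝ)
    (hap : ∀ i j, ap i j ∈ Icc (0:ℝ) 1) (ham : ∀ i j, am i j ∈ Icc (0:ℝ) 1)
    (hb : ∀ i, b i ∈ Ioc (0:ℝ) 1) :
    (∃ x : Fin m → ℝ, (∀ j, x j ∈ Icc (0:ℝ) 1) ∧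
      ∀ i, bSup hm (fun j => (ap i j * x j) ⊔ (am i j * nP (x j))) = b i) ↔
    (∃ Jp Jm : Finset (Fin m), Disjoint Jp Jm ∧
      ∀ i, (∃ j ∈ Jp, b i ≤ ap i j ∧
              ∀ h, resP (b i) (ap i j) ≤ resP (b h) (ap h j)) ∨
           (∃ j ∈ Jm, am i j = b i ∧ ∀ h, am h j ≤ b h)) :=
  stmt13_general n m hn hm ap am b hap hb
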